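/- Let 2 ≤ r ≤ m and t_0 < t_1 < ... < t_m be real numbers, and let g be defined at these points and satisfy (-1)^{m-i}(g(t_i) - g(t_{i-1})) ≥ 0 for all 1 ≤ i ≤ m. Then |[t_0, ..., t_m; g]| · ∏_{i=r}^m (t_i - t_0) ≥ |[t_1, ..., t_r; g]|. -/

import Mathlib

/-- Divided difference of order `m` of `g` at knots `t 0, …, t m`. -/
noncomputable def divDiff (m : ℕ) (t : ℕ → ℝ) (g : ℝ → ℝ) : ℝ :=
  ∑ i ∈ Finset.range (m + 1),
    g (t i) / ∏ j ∈ (Finset.range (m + 1)).erase i, (t i - t j)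

/-!
Divided differences satisfy the recurrence
`[t₀, …, t_{k+1}; g] (t_{k+1} - t₀) = [t₁, …, t_{k+1}; g] - [t₀, …, t_k; g]`.
The alternating signs of the first differences of `g` propagate through it: every divided
difference of order `k + 1` on consecutive knots has sign `ε (-1)^k`, where `ε` depends only on
where the block of knots starts and flips when the block moves one knot to the right. Hence the
two terms on the right have opposite signs, so the left side dominates the absolute value of
each. Chaining this from order `r` up to order `m` gives the estimate.
-/

open Finset

section divDiffOn

variable {ι : Type*} [DecidableEq ι]

noncomputable def divDiffOn (s : Finset ι) (x f : ι → ℝ) : ℝ :=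
  ∑ i ∈ s, f i / ∏ j ∈ s.erase i, (x i - x j)

theorem divDiffOn_map {κ : Type*} [DecidableEq κ] (e : κ ↪ ι) (s : Finset κ)
    (x f : ι → ℝ) :
    divDiffOn (s.map e) x f = divDiffOn s (x ∘ e) (f ∘ e) := by
  simp only [divDiffOn, sum_map, ← map_erase, prod_map, Function.comp_apply]

theorem prod_erase_insert_sub {s : Finset ι} {c i : ι} (hc : c ∉ s) (hi : i ∈ s)
    (x : ι → ℝ) :
    ∏ j ∈ (insert c s).erase i, (x i - x j) =
      (x i - x c) * ∏ j ∈ s.erase i, (x i - x j) := by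
  rw [erase_insert_of_ne (ne_of_mem_of_not_mem hi hc).symm,
    prod_insert fun h => hc (mem_of_mem_erase h)]

theorem divDiffOn_insert_insert_mul_sub {s : Finset ι} {a b : ι} (ha : a ∉ s) (hb : b ∉ s)
    (hab : a ≠ b) {x : ι → ℝ} (hx : Set.InjOn x (insert a (insert b s) : Finset ι))
    (f : ι → ℝ) :
    divDiffOn (insert a (insert b s)) x f * (x a - x b) =
      divDiffOn (insert a s) x f - divDiffOn (insert b s) x f := by
  have hne : ∀ i ∈ insert a (insert b s), ∀ j ∈ insert a (insert b s), i ≠ j →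
      x i - x j ≠ 0 :=
    fun i hi j hj hij => sub_ne_zero.mpr (hx.ne hi hj hij)
  have hP : ∀ i ∈ insert a (insert b s), ∏ j ∈ s.erase i, (x i - x j) ≠ 0 := fun i hi =>
    prod_ne_zero_iff.mpr fun j hj =>
      hne i hi j (by simp [mem_of_mem_erase hj]) (ne_of_mem_erase hj).symm
  have ha' : a ∉ insert b s := by simp [hab, ha]
  have hbs : insert b s ⊆ insert a (insert b s) := subset_insert _ _
  have hs : s ⊆ insert a (insert b s) := (subset_insert _ _).trans hbs
  have hinterior : ∀ i ∈ s,
      f i / (∏ j ∈ (insert a (insert b s)).erase i, (x i - x j)) * (x a - x b) =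
        f i / ∏ j ∈ (insert a s).erase i, (x i - x j) -
          f i / ∏ j ∈ (insert b s).erase i, (x i - x j) := by
    intro i hi
    rw [prod_erase_insert_sub ha' (mem_insert_of_mem hi), prod_erase_insert_sub hb hi,
      prod_erase_insert_sub ha hi]
    have := hne i (hs hi) a (mem_insert_self _ _) (ne_of_mem_of_not_mem hi ha)
    have := hne i (hs hi) b (hbs (mem_insert_self _ _)) (ne_of_mem_of_not_mem hi hb)
    have := hP i (hs hi)
    field_simp
    ring
  have hab' := hne a (mem_insert_self _ _) b (hbs (mem_insert_self _ _)) hab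
  have hba : x b - x a ≠ 0 := sub_ne_zero.mpr fun h => hab' (sub_eq_zero.mpr h.symm)
  have hPa := hP a (mem_insert_self _ _)
  have hPb := hP b (hbs (mem_insert_self _ _))
  rw [erase_eq_of_notMem ha] at hPa
  rw [erase_eq_of_notMem hb] at hPb
  simp only [divDiffOn, sum_insert ha', sum_insert ha, sum_insert hb, add_mul, sum_mul,
    sum_congr rfl hinterior, sum_sub_distrib, erase_insert ha', erase_insert ha, erase_insert hb,
    erase_insert_of_ne hab, prod_insert ha, prod_insert hb]
  field_simp
  ring

end divDiffOn

theorem abs_le_abs_sub_of_mul_nonpos {a b : ℝ} (h : a * b ≤ 0) : |a| ≤ |a - b| :=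
  sq_le_sq.mp (by nlinarith [sq_nonneg b])

section divDiff

variable {t : ℕ → ℝ} {g : ℝ → ℝ}

theorem divDiff_eq_divDiffOn (n : ℕ) (t : ℕ → ℝ) (g : ℝ → ℝ) :
    divDiff n t g = divDiffOn (range (n + 1)) t (g ∘ t) := rfl

theorem divDiff_zero (t : ℕ → ℝ) (g : ℝ → ℝ) : divDiff 0 t g = g (t 0) := by
  simp [divDiff]

theorem divDiff_succ_mul_sub (k : ℕ) (ht : Set.InjOn t (Set.Iic (k + 1))) (g : ℝ → ℝ) :
    divDiff (k + 1) t g * (t (k + 1) - t 0) =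
      divDiff k (fun i => t (i + 1)) g - divDiff k t g := by
  let e : ℕ ↪ ℕ := ⟨fun i => i + 1, add_left_injective 1⟩
  have h0 : 0 ∉ (range k).map e := by simp [e]
  have hk : k + 1 ∉ (range k).map e := by simp [e]
  have hshift : divDiff k (fun i => t (i + 1)) g = divDiffOn ((range (k + 1)).map e) t (g ∘ t) :=
    (divDiffOn_map e (range (k + 1)) t (g ∘ t)).symm
  have hleft : range (k + 1 + 1) = insert (k + 1) (insert 0 ((range k).map e)) := by
    rw [range_add_one, range_add_one']
  have hright : (range (k + 1)).map e = insert (k + 1) ((range k).map e) := by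
    rw [range_add_one, map_insert]
    rfl
  rw [hshift, divDiff_eq_divDiffOn, divDiff_eq_divDiffOn, hright, hleft, range_add_one']
  refine divDiffOn_insert_insert_mul_sub hk h0 k.succ_ne_zero (ht.mono ?_) _
  rw [← hleft, coe_range]
  exact fun i hi => Nat.lt_succ_iff.mp hi

theorem divDiff_succ_eq_div (k : ℕ) (ht : StrictMonoOn t (Set.Iic (k + 1))) (g : ℝ → ℝ) :
    divDiff (k + 1) t g =
      (divDiff k (fun i => t (i + 1)) g - divDiff k t g) / (t (k + 1) - t 0) :=
  eq_div_of_mul_eq (sub_ne_zero.mpr (ht (by simp) (by simp) k.succ_pos).ne')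
    (divDiff_succ_mul_sub k ht.injOn g)

theorem StrictMonoOn.comp_add_one_Iic {n : ℕ} (ht : StrictMonoOn t (Set.Iic (n + 1))) :
    StrictMonoOn (fun i => t (i + 1)) (Set.Iic n) := fun _ hi _ hj hij =>
  ht (Nat.succ_le_succ hi) (Nat.succ_le_succ hj) (Nat.succ_lt_succ hij)

theorem divDiff_sign_of_alternating (k : ℕ) (ht : StrictMonoOn t (Set.Iic (k + 1))) {ε : ℝ}
    (hg : ∀ i ≤ k, 0 ≤ ε * (-1) ^ i * (g (t (i + 1)) - g (t i))) :
    0 ≤ ε * (-1) ^ k * divDiff (k + 1) t g := by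
  induction k generalizing t ε with
  | zero =>
    rw [divDiff_succ_eq_div 0 ht, divDiff_zero, divDiff_zero, mul_div_assoc']
    exact div_nonneg (hg 0 le_rfl) (sub_nonneg.mpr (ht.monotoneOn (by simp) (by simp) zero_le_one))
  | succ k ih =>
    have hshift : 0 ≤ -ε * (-1) ^ k * divDiff (k + 1) (fun i => t (i + 1)) g :=
      ih ht.comp_add_one_Iic fun i hi => by
        simpa [pow_succ] using hg (i + 1) (Nat.succ_le_succ hi)
    have hinit : 0 ≤ ε * (-1) ^ k * divDiff (k + 1) t g :=
      ih (ht.mono (Set.Iic_subset_Iic.mpr (k + 1).le_succ)) fun i hi => hg i (hi.trans k.le_succ)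
    rw [divDiff_succ_eq_div (k + 1) ht, mul_div_assoc']
    refine div_nonneg ?_ (sub_nonneg.mpr (ht.monotoneOn (by simp) (by simp) (Nat.zero_le _)))
    rw [pow_succ]
    linarith

theorem abs_divDiff_le_of_alternating {n : ℕ} (hn : 1 ≤ n)
    (ht : StrictMonoOn t (Set.Iic (n + 1))) {ε : ℝ} (hε : ε ≠ 0)
    (hg : ∀ i ≤ n, 0 ≤ ε * (-1) ^ i * (g (t (i + 1)) - g (t i))) :
    |divDiff n (fun i => t (i + 1)) g| ≤ |divDiff (n + 1) t g| * (t (n + 1) - t 0) ∧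
      |divDiff n t g| ≤ |divDiff (n + 1) t g| * (t (n + 1) - t 0) := by
  obtain ⟨k, rfl⟩ := Nat.exists_eq_add_of_le' hn
  set D₁ := divDiff (k + 1) (fun i => t (i + 1)) g
  set D₀ := divDiff (k + 1) t g
  have hshift : 0 ≤ -ε * (-1) ^ k * D₁ :=
    divDiff_sign_of_alternating k ht.comp_add_one_Iic fun i hi => by
      simpa [pow_succ] using hg (i + 1) (Nat.succ_le_succ hi)
  have hinit : 0 ≤ ε * (-1) ^ k * D₀ :=
    divDiff_sign_of_alternating k (ht.mono (Set.Iic_subset_Iic.mpr (k + 1).le_succ))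
      fun i hi => hg i (hi.trans k.le_succ)
  have hopp : D₁ * D₀ ≤ 0 := by
    have hsq : 0 < (ε * (-1) ^ k) ^ 2 := by positivity
    nlinarith [mul_nonneg hshift hinit]
  have hdiff : |divDiff (k + 1 + 1) t g| * (t (k + 1 + 1) - t 0) = |D₁ - D₀| := by
    rw [← divDiff_succ_mul_sub (k + 1) ht.injOn g, abs_mul,
      abs_of_pos (sub_pos.mpr (ht (by simp) (by simp) (k + 1).succ_pos))]
  rw [hdiff]
  exact ⟨abs_le_abs_sub_of_mul_nonpos hopp,
    (abs_le_abs_sub_of_mul_nonpos (by linarith [mul_comm D₁ D₀])).trans_eq (abs_sub_comm _ _)⟩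

end divDiff

theorem neg_one_pow_sub_eq_pow_add {R : Type*} [Monoid R] [HasDistribNeg R] {i n : ℕ}
    (h : i ≤ n) : (-1 : R) ^ (n - i) = (-1) ^ (n + i) := by
  rw [show n + i = n - i + 2 * i by omega, pow_add, pow_mul]
  simp

theorem le_mul_prod_Ioc_of_le_mul {a c : ℕ → ℝ} {p q : ℕ} (hpq : p ≤ q)
    (hc : ∀ i ∈ Ioc p q, 0 ≤ c i) (h : ∀ j ∈ Ico p q, a j ≤ a (j + 1) * c (j + 1)) :
    a p ≤ a q * ∏ i ∈ Ioc p q, c i := by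
  induction q, hpq using Nat.le_induction with
  | base => simp
  | succ q hpq ih =>
    have hprod : 0 ≤ ∏ i ∈ Ioc p q, c i :=
      prod_nonneg fun i hi => hc i (Ioc_subset_Ioc_right q.le_succ hi)
    calc a p ≤ a q * ∏ i ∈ Ioc p q, c i :=
          ih (fun i hi => hc i (Ioc_subset_Ioc_right q.le_succ hi))
            fun j hj => h j (Ico_subset_Ico_right q.le_succ hj)
      _ ≤ a (q + 1) * c (q + 1) * ∏ i ∈ Ioc p q, c i :=
          mul_le_mul_of_nonneg_right (h q (by simp [hpq])) hprod
      _ = a (q + 1) * ∏ i ∈ Ioc p (q + 1), c i := by rw [prod_Ioc_succ_top hpq]; ring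

theorem stmt3 (m r : ℕ) (hr : 2 ≤ r) (hrm : r ≤ m) (t : ℕ → ℝ) (g : ℝ → ℝ)
    (ht : ∀ i < m, t i < t (i + 1))
    (hg : ∀ i, 1 ≤ i → i ≤ m → 0 ≤ (-1 : ℝ) ^ (m - i) * (g (t i) - g (t (i - 1)))) :
    |divDiff (r - 1) (fun i => t (i + 1)) g| ≤
      |divDiff m t g| * ∏ i ∈ Finset.Icc r m, (t i - t 0) := by
  have hmono : StrictMonoOn t (Set.Iic m) := strictMonoOn_Iic_of_lt_succ ht
  have hnonneg : ∀ i ≤ m, 0 ≤ t i - t 0 := fun i hi =>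
    sub_nonneg.mpr (hmono.monotoneOn (by simp) hi (Nat.zero_le i))
  have halternating : ∀ i < m, 0 ≤ (-1) ^ (m + 1) * (-1) ^ i * (g (t (i + 1)) - g (t i)) := by
    intro i hi
    simpa [neg_one_pow_sub_eq_pow_add hi, ← add_assoc, pow_add, pow_succ] using
      hg (i + 1) (by omega) hi
  have hstep : ∀ j, 1 ≤ j → j < m →
      |divDiff j (fun i => t (i + 1)) g| ≤ |divDiff (j + 1) t g| * (t (j + 1) - t 0) ∧
        |divDiff j t g| ≤ |divDiff (j + 1) t g| * (t (j + 1) - t 0) := fun j hj hjm =>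
    abs_divDiff_le_of_alternating hj (hmono.mono (Set.Iic_subset_Iic.mpr hjm)) (by simp)
      fun i hi => halternating i (by omega)
  have hfirst : |divDiff (r - 1) (fun i => t (i + 1)) g| ≤ |divDiff r t g| * (t r - t 0) := by
    simpa [Nat.sub_add_cancel (by omega : 1 ≤ r)] using (hstep (r - 1) (by omega) (by omega)).1
  have hchain : |divDiff r t g| ≤ |divDiff m t g| * ∏ i ∈ Ioc r m, (t i - t 0) :=
    le_mul_prod_Ioc_of_le_mul hrm (fun i hi => hnonneg i (mem_Ioc.mp hi).2)
      fun j hj => (hstep j (by grind) (mem_Ico.mp hj).2).2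
  calc |divDiff (r - 1) (fun i => t (i + 1)) g| ≤ |divDiff r t g| * (t r - t 0) := hfirst
    _ ≤ |divDiff m t g| * (∏ i ∈ Ioc r m, (t i - t 0)) * (t r - t 0) :=
        mul_le_mul_of_nonneg_right hchain (hnonneg r hrm)
    _ = |divDiff m t g| * ∏ i ∈ Icc r m, (t i - t 0) := by
        rw [← Ioc_insert_left hrm, prod_insert left_notMem_Ioc]
        ring
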